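/- arXiv:2205.08098 — 3 statements merged into one kernel-verified Lean document; each statement's English description precedes it below -/
import Mathlib

section
/- Let Θ be the closed unit ball of ℝ^d and suppose the landscape assumptions hold with constants S, μ, α, r > 0 and unique global minimizer θ_0* of F. Let T : Θ → Θ be any map satisfying T(θ) = θ_0* for every θ ∈ B_r(θ_0*). Set δ = (1/4)·min{μ, r, α}, and suppose the sample size n is large enough that, with probability at least 1 − ρ over the data x_1, …, x_n, the empirical risk F̂_n is a δ-approximation of F. Conditionally on the data, let θ_1, …, θ_L satisfy the sampler assumption with total-variation error δ_β. Then there exist constants C, c > 0 (depending only on d, α, r, μ and S, and not on β, L, δ_β or n) such that for every β ≥ c·r^{−2}, the probability that T(θ_i) ≠ θ_0* for all i = 1, …, L is at most ρ + (C·β^d·exp(−β·α/2) + δ_β)^L. -/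
open MeasureTheory ProbabilityTheory
open scoped RealInnerProductSpace

noncomputable section

/-- The closed unit ball of `ℝ^d`, the parameter domain. -/
def unitDomain (d : ℕ) : Set (EuclideanSpace ℝ (Fin d)) := Metric.closedBall 0 1

/-- The Hessian of `F`, as the Fréchet derivative of the gradient. -/
def hess {d : ℕ} (F : EuclideanSpace ℝ (Fin d) → ℝ) (θ : EuclideanSpace ℝ (Fin d)) :
    EuclideanSpace ℝ (Fin d) →L[ℝ] EuclideanSpace ℝ (Fin d) :=
  fderiv ℝ (gradient F) θ

/-- `F̂` is a `δ`-approximation of `F` on the closed unit ball `Θ` of `ℝ^d`: the values,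
gradients and Hessians (in operator norm) are uniformly `δ`-close on `Θ`, and `F` and `F̂`
have the same number `K+1` of stationary points (interior points of `Θ` with vanishing
gradient), which can be paired so that corresponding ones are `δ`-close. -/
def IsDeltaApprox {d : ℕ} (F Fhat : EuclideanSpace ℝ (Fin d) → ℝ) (δ : ℝ) : Prop :=
  (∀ θ ∈ unitDomain d, |F θ - Fhat θ| ≤ δ) ∧
  (∀ θ ∈ unitDomain d, ‖gradient F θ - gradient Fhat θ‖ ≤ δ) ∧
  (∀ θ ∈ unitDomain d, ‖hess F θ - hess Fhat θ‖ ≤ δ) ∧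
  ∃ (K : ℕ) (s shat : Fin (K + 1) → EuclideanSpace ℝ (Fin d)),
    Function.Injective s ∧ Function.Injective shat ∧
    Set.range s = {θ | θ ∈ Metric.ball (0 : EuclideanSpace ℝ (Fin d)) 1 ∧
      gradient F θ = 0} ∧
    Set.range shat = {θ | θ ∈ Metric.ball (0 : EuclideanSpace ℝ (Fin d)) 1 ∧
      gradient Fhat θ = 0} ∧
    ∀ i, ‖s i - shat i‖ ≤ δ

/-- The Gibbs measure `π_β ∝ exp(−β F̂)·1_Θ` on the closed unit ball `Θ` of `ℝ^d`. -/
def gibbs {d : ℕ} (Fhat : EuclideanSpace ℝ (Fin d) → ℝ) (β : ℝ) :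
    Measure (EuclideanSpace ℝ (Fin d)) :=
  (((volume.restrict (unitDomain d)).withDensity
      fun θ => ENNReal.ofReal (Real.exp (-(β * Fhat θ)))) Set.univ)⁻¹ •
    ((volume.restrict (unitDomain d)).withDensity
      fun θ => ENNReal.ofReal (Real.exp (-(β * Fhat θ))))

/-!
Outside `B_r(θ₀)` the empirical risk `F̂` exceeds `F θ₀ + α − δ`, while on the ball
`B_{1/β}(θ₀)`, whose volume is a fraction `β⁻ᵈ` of that of `Θ`, the Hessian bound keeps it below
`F θ₀ + δ + S/β`. Since `2δ ≤ α/2`, the Gibbs measure `π_β` of a `δ`-approximation gives mass at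
most `e^S β^d e^{−βα/2}` to the complement of `B_r(θ₀)`, so each sample, given the data and the
earlier samples, misses `B_r(θ₀)` with probability at most `q = e^S β^d e^{−βα/2} + δ_β`.
Conditioning step by step, all `L` samples miss it with probability at most `q^L`, and the data
fail to give a `δ`-approximation with probability at most `ρ`. A sample in `B_r(θ₀)` is sent to
`θ₀` by `T`.
-/

open Metric Set
open scoped ENNReal

section Gradient

variable {E : Type*} [NormedAddCommGroup E] [InnerProductSpace ℝ E] [CompleteSpace E]
  {f : E → ℝ}

lemma norm_gradient_eq_norm_fderiv (x : E) : ‖gradient f x‖ = ‖fderiv ℝ f x‖ :=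
  (InnerProductSpace.toDual ℝ E).symm.norm_map _

lemma ContDiff.differentiable_gradient (hf : ContDiff ℝ 2 f) : Differentiable ℝ (gradient f) :=
  (InnerProductSpace.toDual ℝ E).symm.toContinuousLinearEquiv.differentiable.comp
    ((hf.fderiv_right (m := 1) (by norm_num)).differentiable (by norm_num))

lemma IsLocalMin.gradient_eq_zero {a : E} (h : IsLocalMin f a) : gradient f a = 0 := by
  simp [gradient, h.fderiv_eq_zero]

end Gradient

variable {d : ℕ}

section Landscape

variable {F : EuclideanSpace ℝ (Fin d) → ℝ} {θ0 θ : EuclideanSpace ℝ (Fin d)} {S t : ℝ}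

lemma norm_gradient_le_of_norm_hess_le (hF : ContDiff ℝ 2 F) (hgrad : gradient F θ0 = 0)
    (hhess : ∀ x ∈ closedBall θ0 t, ‖hess F x‖ ≤ S) (hθ : θ ∈ closedBall θ0 t) :
    ‖gradient F θ‖ ≤ S * ‖θ - θ0‖ := by
  simpa [hgrad] using (convex_closedBall θ0 t).norm_image_sub_le_of_norm_fderiv_le
    (fun x _ => hF.differentiable_gradient.differentiableAt) hhess
    (mem_closedBall_self (nonempty_closedBall.1 ⟨θ, hθ⟩)) hθ

lemma sub_le_of_norm_hess_le (hS : 0 ≤ S) (hF : ContDiff ℝ 2 F) (hgrad : gradient F θ0 = 0)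
    (hhess : ∀ x ∈ closedBall θ0 t, ‖hess F x‖ ≤ S) (hθ : θ ∈ closedBall θ0 t) :
    F θ - F θ0 ≤ S * t ^ 2 := by
  have hgrad_le : ∀ x ∈ closedBall θ0 t, ‖fderiv ℝ F x‖ ≤ S * t := fun x hx => by
    rw [← norm_gradient_eq_norm_fderiv]
    exact (norm_gradient_le_of_norm_hess_le hF hgrad hhess hx).trans
      (mul_le_mul_of_nonneg_left (mem_closedBall_iff_norm.1 hx) hS)
  have hmv := (convex_closedBall θ0 t).norm_image_sub_le_of_norm_fderiv_le
    (fun x _ => (hF.differentiable (by norm_num)).differentiableAt) hgrad_le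
    (mem_closedBall_self (nonempty_closedBall.1 ⟨θ, hθ⟩)) hθ
  have ht : ‖θ - θ0‖ ≤ t := mem_closedBall_iff_norm.1 hθ
  calc F θ - F θ0 ≤ S * t * ‖θ - θ0‖ := (le_abs_self _).trans hmv
    _ ≤ S * t * t := mul_le_mul_of_nonneg_left ht (mul_nonneg hS ((norm_nonneg _).trans ht))
    _ = S * t ^ 2 := by ring

end Landscape

section Gibbs

def gibbsWeight (Fhat : EuclideanSpace ℝ (Fin d) → ℝ) (β : ℝ) :
    Measure (EuclideanSpace ℝ (Fin d)) :=
  (volume.restrict (unitDomain d)).withDensity fun θ => ENNReal.ofReal (Real.exp (-(β * Fhat θ)))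

variable {Fhat : EuclideanSpace ℝ (Fin d) → ℝ} {β a b : ℝ} {s : Set (EuclideanSpace ℝ (Fin d))}

lemma gibbs_eq : gibbs Fhat β = (gibbsWeight Fhat β univ)⁻¹ • gibbsWeight Fhat β := rfl

lemma gibbs_le_of_le_mul {c : ℝ≥0∞} (h : gibbsWeight Fhat β s ≤ c * gibbsWeight Fhat β univ) :
    gibbs Fhat β s ≤ c := by
  rw [gibbs_eq, Measure.smul_apply, smul_eq_mul]
  calc (gibbsWeight Fhat β univ)⁻¹ * gibbsWeight Fhat β s
      ≤ (gibbsWeight Fhat β univ)⁻¹ * (c * gibbsWeight Fhat β univ) := by gcongr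
    _ = c * ((gibbsWeight Fhat β univ)⁻¹ * gibbsWeight Fhat β univ) := by ring
    _ ≤ c := mul_le_of_le_one_right' (ENNReal.inv_mul_le_one _)

lemma gibbsWeight_le (hβ : 0 ≤ β) (hs : MeasurableSet s)
    (hb : ∀ θ ∈ s ∩ unitDomain d, b ≤ Fhat θ) :
    gibbsWeight Fhat β s ≤ ENNReal.ofReal (Real.exp (-(β * b))) * volume (unitDomain d) := by
  rw [gibbsWeight, withDensity_apply _ hs, Measure.restrict_restrict hs]
  calc ∫⁻ θ in s ∩ unitDomain d, ENNReal.ofReal (Real.exp (-(β * Fhat θ)))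
      ≤ ∫⁻ _ in s ∩ unitDomain d, ENNReal.ofReal (Real.exp (-(β * b))) :=
        setLIntegral_mono' (hs.inter measurableSet_closedBall) fun θ hθ => by
          gcongr; exact hb θ hθ
    _ ≤ ENNReal.ofReal (Real.exp (-(β * b))) * volume (unitDomain d) := by
        rw [setLIntegral_const]; gcongr; exact inter_subset_right

lemma le_gibbsWeight (hβ : 0 ≤ β) (hs : MeasurableSet s) (hsΘ : s ⊆ unitDomain d)
    (ha : ∀ θ ∈ s, Fhat θ ≤ a) :
    ENNReal.ofReal (Real.exp (-(β * a))) * volume s ≤ gibbsWeight Fhat β s := by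
  rw [gibbsWeight, withDensity_apply _ hs, Measure.restrict_restrict hs,
    inter_eq_self_of_subset_left hsΘ, ← setLIntegral_const]
  exact setLIntegral_mono' hs fun θ hθ => by gcongr; exact ha θ hθ

lemma gibbs_le_of_gap {θ0 : EuclideanSpace ℝ (Fin d)} {t : ℝ} (hβ : 0 ≤ β) (ht : 0 < t)
    (hs : MeasurableSet s) (hball : closedBall θ0 t ⊆ unitDomain d)
    (ha : ∀ θ ∈ closedBall θ0 t, Fhat θ ≤ a) (hb : ∀ θ ∈ s ∩ unitDomain d, b ≤ Fhat θ) :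
    gibbs Fhat β s ≤ ENNReal.ofReal (Real.exp (-(β * (b - a))) / t ^ d) := by
  set c := Real.exp (-(β * (b - a))) / t ^ d
  have hsplit : Real.exp (-(β * b)) = c * (Real.exp (-(β * a)) * t ^ d) := by
    have : t ^ d ≠ 0 := pow_ne_zero d ht.ne'
    simp only [c]
    field_simp
    rw [← Real.exp_add]
    ring_nf
  apply gibbs_le_of_le_mul
  calc gibbsWeight Fhat β s
      ≤ ENNReal.ofReal (Real.exp (-(β * b))) * volume (unitDomain d) := gibbsWeight_le hβ hs hb
    _ = ENNReal.ofReal c * (ENNReal.ofReal (Real.exp (-(β * a))) * volume (closedBall θ0 t)) := by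
        rw [hsplit, Measure.addHaar_closedBall' _ _ ht.le, finrank_euclideanSpace_fin,
          ENNReal.ofReal_mul (by positivity), ENNReal.ofReal_mul (by positivity)]
        simp only [unitDomain, mul_assoc]
    _ ≤ ENNReal.ofReal c * gibbsWeight Fhat β univ := by
        gcongr
        exact (le_gibbsWeight hβ measurableSet_closedBall hball ha).trans
          (measure_mono (subset_univ _))

end Gibbs

lemma gibbs_compl_closedBall_le {F Fhat : EuclideanSpace ℝ (Fin d) → ℝ}
    {θ0 : EuclideanSpace ℝ (Fin d)} {S α r δ β : ℝ} (hS : 0 ≤ S) (hF : ContDiff ℝ 2 F)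
    (hhess : ∀ θ ∈ unitDomain d, ‖hess F θ‖ ≤ S) (hmin : IsMinOn F (unitDomain d) θ0)
    (hr : 0 < r) (hball : closedBall θ0 r ⊆ unitDomain d)
    (hout : ∀ θ ∈ unitDomain d, θ ∉ closedBall θ0 r → F θ0 + α ≤ F θ)
    (happrox : ∀ θ ∈ unitDomain d, |F θ - Fhat θ| ≤ δ) (hδ : δ ≤ α / 4)
    (hβ : 1 ≤ β) (hβr : 1 ≤ β * r) :
    gibbs Fhat β (closedBall θ0 r)ᶜ ≤
      ENNReal.ofReal (Real.exp S * β ^ d * Real.exp (-(β * α / 2))) := by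
  have hβ0 : 0 < β := one_pos.trans_le hβ
  set t := β⁻¹
  have ht : 0 < t := inv_pos.2 hβ0
  have hsmall : closedBall θ0 t ⊆ unitDomain d :=
    (closedBall_subset_closedBall ((inv_le_iff_one_le_mul₀' hβ0).2 hβr)).trans hball
  have hgrad : gradient F θ0 = 0 :=
    (hmin.isLocalMin (Filter.mem_of_superset (closedBall_mem_nhds θ0 hr) hball)).gradient_eq_zero
  have hlow : ∀ θ ∈ closedBall θ0 t, Fhat θ ≤ F θ0 + S * t ^ 2 + δ := fun θ hθ => by
    have := sub_le_of_norm_hess_le hS hF hgrad (fun x hx => hhess x (hsmall hx)) hθ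
    linarith [(abs_le.1 (happrox θ (hsmall hθ))).1]
  have hhigh : ∀ θ ∈ (closedBall θ0 r)ᶜ ∩ unitDomain d, F θ0 + α - δ ≤ Fhat θ := fun θ hθ => by
    linarith [hout θ hθ.2 hθ.1, (abs_le.1 (happrox θ hθ.2)).2]
  refine (gibbs_le_of_gap hβ0.le ht measurableSet_closedBall.compl hsmall hlow hhigh).trans
    (ENNReal.ofReal_le_ofReal ?_)
  have hexp : -(β * (F θ0 + α - δ - (F θ0 + S * t ^ 2 + δ))) ≤ S + -(β * α / 2) := by
    nlinarith [show β * t = 1 from mul_inv_cancel₀ hβ0.ne', mul_le_mul_of_nonneg_left hδ hβ0.le,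
      mul_le_mul_of_nonneg_left (show t ≤ 1 from inv_le_one_of_one_le₀ hβ) hS]
  calc Real.exp (-(β * (F θ0 + α - δ - (F θ0 + S * t ^ 2 + δ)))) / t ^ d
      = β ^ d * Real.exp (-(β * (F θ0 + α - δ - (F θ0 + S * t ^ 2 + δ)))) := by
        rw [div_eq_mul_inv, ← inv_pow, inv_inv, mul_comm]
    _ ≤ β ^ d * Real.exp (S + -(β * α / 2)) := by gcongr
    _ = Real.exp S * β ^ d * Real.exp (-(β * α / 2)) := by rw [Real.exp_add]; ring

section Sampling

variable {Ω : Type*} {m0 : MeasurableSpace Ω} {P : Measure Ω}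

lemma measureReal_compl_le_of_ae_imp [IsProbabilityMeasure P] {s t : Set Ω} {ρ : ℝ}
    (ht : MeasurableSet t) (hst : ∀ᵐ ω ∂P, ω ∈ s → ω ∈ t) (hs : 1 - ρ ≤ P.real s) :
    P.real tᶜ ≤ ρ := by
  have : P.real s ≤ P.real t := ENNReal.toReal_mono (measure_ne_top P t) (measure_mono_ae hst)
  rw [probReal_compl_eq_one_sub ht]
  linarith

lemma measureReal_inter_condExp_le [IsFiniteMeasure P] {m : MeasurableSpace Ω} (hm : m ≤ m0)
    {A E : Set Ω} (hA : MeasurableSet[m] A) (hE : MeasurableSet[m0] E) {q : ℝ} (hq : 0 ≤ q) :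
    P.real (A ∩ {ω | P[E.indicator (fun _ => (1 : ℝ)) | m] ω ≤ q} ∩ E) ≤ q * P.real A := by
  set B := A ∩ {ω | P[E.indicator (fun _ => (1 : ℝ)) | m] ω ≤ q}
  have hB : MeasurableSet[m] B :=
    hA.inter (measurableSet_le stronglyMeasurable_condExp.measurable measurable_const)
  calc P.real (B ∩ E) = ∫ ω in B, E.indicator (fun _ => (1 : ℝ)) ω ∂P := by
        rw [setIntegral_indicator hE, setIntegral_const, smul_eq_mul, mul_one]
    _ = ∫ ω in B, P[E.indicator (fun _ => (1 : ℝ)) | m] ω ∂P :=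
        (setIntegral_condExp hm ((integrable_const 1).indicator hE) hB).symm
    _ ≤ ∫ _ in B, q ∂P :=
        setIntegral_mono_on integrable_condExp.integrableOn integrableOn_const
          (hm _ hB) fun ω hω => hω.2
    _ = q * P.real B := by rw [setIntegral_const, smul_eq_mul, mul_comm]
    _ ≤ q * P.real A := mul_le_mul_of_nonneg_left (measureReal_mono inter_subset_left) hq

lemma measureReal_iInter_condExp_le_pow [IsProbabilityMeasure P] {q : ℝ} (hq : 0 ≤ q) :
    ∀ {L : ℕ} (𝔽 : Fin L → MeasurableSpace Ω), (∀ i, 𝔽 i ≤ m0) → Monotone 𝔽 →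
      ∀ (E : Fin L → Set Ω), (∀ i, MeasurableSet[m0] (E i)) →
      (∀ i j, i < j → MeasurableSet[𝔽 j] (E i)) →
      P.real (⋂ i, {ω | P[(E i).indicator (fun _ => (1 : ℝ)) | 𝔽 i] ω ≤ q} ∩ E i) ≤ q ^ L
  | 0, _, _, _, _, _, _ => by simp
  | L + 1, 𝔽, h𝔽, hmono, E, hE, hE𝔽 => by
    set past := ⋂ i : Fin L, {ω | P[(E i.castSucc).indicator (fun _ => (1 : ℝ)) |
      𝔽 i.castSucc] ω ≤ q} ∩ E i.castSucc
    have hpast : MeasurableSet[𝔽 (Fin.last L)] past := by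
      refine MeasurableSet.iInter fun i => MeasurableSet.inter ?_
        (hE𝔽 _ _ (Fin.castSucc_lt_last i))
      exact hmono (Fin.castSucc_lt_last i).le _
        (measurableSet_le stronglyMeasurable_condExp.measurable measurable_const)
    have hsplit : ⋂ i, {ω | P[(E i).indicator (fun _ => (1 : ℝ)) | 𝔽 i] ω ≤ q} ∩ E i =
        past ∩ {ω | P[(E (Fin.last L)).indicator (fun _ => (1 : ℝ)) | 𝔽 (Fin.last L)] ω ≤ q} ∩
          E (Fin.last L) := by
      ext ω
      simp only [past, mem_iInter, Fin.forall_fin_succ', mem_inter_iff, and_assoc]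
    calc _ = _ := congrArg P.real hsplit
      _ ≤ q * P.real past := measureReal_inter_condExp_le (h𝔽 _) hpast (hE _) hq
      _ ≤ q * q ^ L := mul_le_mul_of_nonneg_left (measureReal_iInter_condExp_le_pow hq
          (fun i => 𝔽 i.castSucc) (fun i => h𝔽 _) (hmono.comp Fin.strictMono_castSucc.monotone)
          (fun i => E i.castSucc) (fun i => hE _) fun i j hij => hE𝔽 _ _ (by simpa using hij)) hq
      _ = q ^ (L + 1) := by ring

section SampleFiltration

variable {E : Type*} [MeasurableSpace E] {L : ℕ} (mData : MeasurableSpace Ω)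
  (θs : Fin L → Ω → E)

abbrev sampleFiltration (i : Fin L) : MeasurableSpace Ω :=
  mData ⊔ ⨆ j : Fin L, ⨆ _ : j < i, MeasurableSpace.comap (θs j) inferInstance

lemma sampleFiltration_mono : Monotone (sampleFiltration mData θs) := by
  intro i j hij
  refine sup_le_sup_left (iSup₂_le fun k hk => ?_) _
  exact le_iSup₂_of_le (f := fun k (_ : k < j) => MeasurableSpace.comap (θs k) inferInstance) k
    (hk.trans_le hij) le_rfl

variable {mData θs}

lemma sampleFiltration_le (hm : mData ≤ m0) (hθs : ∀ i, Measurable[m0] (θs i)) (i : Fin L) :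
    sampleFiltration mData θs i ≤ m0 :=
  sup_le hm (iSup_le fun j => iSup_le fun _ => (hθs j).comap_le)

lemma measurableSet_preimage_sampleFiltration {i j : Fin L} (hij : i < j) {A : Set E}
    (hA : MeasurableSet A) : MeasurableSet[sampleFiltration mData θs j] (θs i ⁻¹' A) :=
  (le_sup_of_le_right (le_iSup₂_of_le i hij le_rfl) : MeasurableSpace.comap (θs i) _ ≤ _) _
    ⟨A, hA, rfl⟩

lemma measureReal_forall_mem_le [IsProbabilityMeasure P] (hm : mData ≤ m0)
    (hθs : ∀ i, Measurable[m0] (θs i)) {A : Set E} (hA : MeasurableSet A) {s : Set Ω} {q ρ : ℝ}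
    (hq : 0 ≤ q) (hs : 1 - ρ ≤ P.real s)
    (hcond : ∀ᵐ ω ∂P, ω ∈ s → ∀ i,
      P[(θs i ⁻¹' A).indicator (fun _ => (1 : ℝ)) | sampleFiltration mData θs i] ω ≤ q) :
    P.real {ω | ∀ i, θs i ω ∈ A} ≤ ρ + q ^ L := by
  set G := {ω | ∀ i,
    P[(θs i ⁻¹' A).indicator (fun _ => (1 : ℝ)) | sampleFiltration mData θs i] ω ≤ q}
  have hG : MeasurableSet[m0] G := by
    simp only [G, ofPred_forall]
    exact .iInter fun i => sampleFiltration_le hm hθs i _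
      (measurableSet_le stronglyMeasurable_condExp.measurable measurable_const)
  have hsplit : {ω | ∀ i, θs i ω ∈ A} ⊆ Gᶜ ∪ ⋂ i, {ω |
      P[(θs i ⁻¹' A).indicator (fun _ => (1 : ℝ)) | sampleFiltration mData θs i] ω ≤ q} ∩
        θs i ⁻¹' A := fun ω hω => by
    by_cases hωG : ω ∈ G
    exacts [.inr (mem_iInter.2 fun i => ⟨hωG i, hω i⟩), .inl hωG]
  calc P.real {ω | ∀ i, θs i ω ∈ A} ≤ P.real Gᶜ + P.real (⋂ i, _) :=
        (measureReal_mono hsplit).trans (measureReal_union_le _ _)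
    _ ≤ ρ + q ^ L := add_le_add (measureReal_compl_le_of_ae_imp hG hcond hs)
        (measureReal_iInter_condExp_le_pow hq _ (sampleFiltration_le hm hθs)
          (sampleFiltration_mono mData θs) _ (fun i => hθs i hA)
          fun _ _ hij => measurableSet_preimage_sampleFiltration hij hA)

end SampleFiltration

end Sampling

theorem stmt_0_general (d : ℕ) (S μ α r ρ : ℝ)
    (hS : 0 < S) (hr : 0 < r) :
    ∃ C > 0, ∃ c > 0, ∀ β : ℝ, c / r ^ 2 ≤ β →
      ∀ (F : EuclideanSpace ℝ (Fin d) → ℝ) (θ0 : EuclideanSpace ℝ (Fin d))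
        (T : EuclideanSpace ℝ (Fin d) → EuclideanSpace ℝ (Fin d)),
        ContDiff ℝ 2 F →
        (∀ θ ∈ unitDomain d, ‖hess F θ‖ ≤ S) →
        θ0 ∈ unitDomain d →
        (∀ θ ∈ unitDomain d, θ ≠ θ0 → F θ0 < F θ) →
        Metric.closedBall θ0 r ⊆ unitDomain d →
        (∀ θ ∈ Metric.closedBall θ0 r, ∀ v, μ * ‖v‖ ^ 2 ≤ ⟪v, hess F θ v⟫) →
        (∀ θ ∈ unitDomain d, θ ∉ Metric.closedBall θ0 r → F θ0 + α ≤ F θ) →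
        (∀ θ ∈ Metric.closedBall θ0 r, T θ = θ0) →
        ∀ (Ω : Type) (mΩ : MeasurableSpace Ω) (P : Measure Ω),
          IsProbabilityMeasure P →
          ∀ mData : MeasurableSpace Ω, mData ≤ mΩ →
          ∀ (Fhat : Ω → EuclideanSpace ℝ (Fin d) → ℝ) (L : ℕ)
            (θs : Fin L → Ω → EuclideanSpace ℝ (Fin d)) (δβ : ℝ),
            0 ≤ δβ → δβ < 1 →
            (∀ i, Measurable (θs i)) →
            1 - ρ ≤ (P {ω | IsDeltaApprox F (Fhat ω) (min μ (min r α) / 4)}).toReal →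
            (∀ (i : Fin L) (A : Set (EuclideanSpace ℝ (Fin d))), MeasurableSet A →
              ∀ᵐ ω ∂P,
                |(P[(fun ω' => Set.indicator A (fun _ => (1 : ℝ)) (θs i ω')) |
                    mData ⊔ ⨆ j : Fin L, ⨆ _ : j < i,
                      MeasurableSpace.comap (θs j) inferInstance]) ω -
                  ((gibbs (Fhat ω) β) A).toReal| ≤ δβ) →
            (P {ω | ∀ i, T (θs i ω) ≠ θ0}).toReal ≤
              ρ + (C * β ^ d * Real.exp (-(β * α / 2)) + δβ) ^ L := by
  refine ⟨Real.exp S, Real.exp_pos S, r ^ 2 + r, by positivity, ?_⟩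
  intro β hβ F θ0 T hF hhess _ hmin hball _ hout hT Ω mΩ P _ mData hmData Fhat L θs δβ hδβ _
    hθs hgood hcond
  have hβ1 : 1 ≤ β ∧ 1 ≤ β * r := by
    rw [div_le_iff₀ (by positivity)] at hβ
    constructor <;> nlinarith
  have hβ0 : 0 ≤ β := zero_le_one.trans hβ1.1
  have hminOn : IsMinOn F (unitDomain d) θ0 := isMinOn_iff.2 fun θ hθ => by
    rcases eq_or_ne θ θ0 with rfl | hne
    exacts [le_rfl, (hmin θ hθ hne).le]
  have hA : MeasurableSet (closedBall θ0 r)ᶜ := measurableSet_closedBall.compl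
  -- `Measurable (θs i)` in the statement is taken with respect to the last instance, `mData`.
  have hall := measureReal_forall_mem_le hmData (fun i => (hθs i).mono hmData le_rfl) hA
    (q := Real.exp S * β ^ d * Real.exp (-(β * α / 2)) + δβ) (by positivity) hgood ?_
  · exact hall.trans' (measureReal_mono fun ω hω i hi => hω i (hT _ hi))
  filter_upwards [ae_all_iff.2 fun i => hcond i _ hA] with ω hω happrox i
  have hπ := ENNReal.toReal_le_of_le_ofReal (by positivity) <|
    gibbs_compl_closedBall_le hS.le hF hhess hminOn hr hball hout happrox.1
      (by linarith [min_le_right μ (min r α), min_le_right r α]) hβ1.1 hβ1.2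
  exact (sub_le_iff_le_add.1 (abs_le.1 (hω i)).2).trans (by linarith)

/-- sampling approach, Theorem 3.1 of the paper: under the landscape
assumptions with constants `S, μ, α, r` and unique global minimizer `θ0` of `F`, for
any optimizer `T` sending every point of `B_r(θ0)` to `θ0`, with `δ = min{μ,r,α}/4`,
there are constants `C, c > 0` (not depending on `β`, `L`, `δβ`, the data, or the
sampler) such that for every `β ≥ c·r⁻²`: whenever the (random) empirical risk `F̂` is a
`δ`-approximation of `F` with probability at least `1 − ρ`, and, conditionally on the
data, `θ_1, …, θ_L` are drawn by a sampler whose conditional laws are within total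
variation `δβ` of the Gibbs measure `π_β` of `F̂`, the probability that `T(θ_i) ≠ θ0`
for all `i` is at most `ρ + (C·β^d·exp(−βα/2) + δβ)^L`. -/
theorem stmt_0 (d : ℕ) (hd : 0 < d) (S μ α r ρ : ℝ)
    (hS : 0 < S) (hμ : 0 < μ) (hα : 0 < α) (hr : 0 < r) (hρ : 0 ≤ ρ) :
    ∃ C > 0, ∃ c > 0, ∀ β : ℝ, c / r ^ 2 ≤ β →
      ∀ (F : EuclideanSpace ℝ (Fin d) → ℝ) (θ0 : EuclideanSpace ℝ (Fin d))
        (T : EuclideanSpace ℝ (Fin d) → EuclideanSpace ℝ (Fin d)),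
        ContDiff ℝ 2 F →
        (∀ θ ∈ unitDomain d, ‖hess F θ‖ ≤ S) →
        θ0 ∈ unitDomain d →
        (∀ θ ∈ unitDomain d, θ ≠ θ0 → F θ0 < F θ) →
        Metric.closedBall θ0 r ⊆ unitDomain d →
        (∀ θ ∈ Metric.closedBall θ0 r, ∀ v, μ * ‖v‖ ^ 2 ≤ ⟪v, hess F θ v⟫) →
        (∀ θ ∈ unitDomain d, θ ∉ Metric.closedBall θ0 r → F θ0 + α ≤ F θ) →
        (∀ θ ∈ Metric.closedBall θ0 r, T θ = θ0) →
        ∀ (Ω : Type) (mΩ : MeasurableSpace Ω) (P : Measure Ω),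
          IsProbabilityMeasure P →
          ∀ mData : MeasurableSpace Ω, mData ≤ mΩ →
          ∀ (Fhat : Ω → EuclideanSpace ℝ (Fin d) → ℝ) (L : ℕ)
            (θs : Fin L → Ω → EuclideanSpace ℝ (Fin d)) (δβ : ℝ),
            0 ≤ δβ → δβ < 1 →
            (∀ i, Measurable (θs i)) →
            1 - ρ ≤ (P {ω | IsDeltaApprox F (Fhat ω) (min μ (min r α) / 4)}).toReal →
            (∀ (i : Fin L) (A : Set (EuclideanSpace ℝ (Fin d))), MeasurableSet A →
              ∀ᵐ ω ∂P,
                |(P[(fun ω' => Set.indicator A (fun _ => (1 : ℝ)) (θs i ω')) |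
                    mData ⊔ ⨆ j : Fin L, ⨆ _ : j < i,
                      MeasurableSpace.comap (θs j) inferInstance]) ω -
                  ((gibbs (Fhat ω) β) A).toReal| ≤ δβ) →
            (P {ω | ∀ i, T (θs i ω) ≠ θ0}).toReal ≤
              ρ + (C * β ^ d * Real.exp (-(β * α / 2)) + δβ) ^ L :=
  stmt_0_general d S μ α r ρ hS hr
end
end

section
/- Let Θ be a measurable space, π a probability measure on Θ, B ⊆ Θ a measurable set, and δ_β ∈ [0,1). Let X_1, …, X_L be random variables with values in Θ such that for each i = 1, …, L, almost surely, the conditional distribution of X_i given (X_1, …, X_{i−1}) is a probability measure π̂ with total-variation distance ‖π̂ − π‖_TV ≤ δ_β. Then P(X_1 ∉ B, X_2 ∉ B, …, X_L ∉ B) ≤ (π(B^c) + δ_β)^L. -/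
open MeasureTheory ProbabilityTheory

/-!
Given the first `i` draws, `X_{i+1}` avoids `B` with conditional probability at most
`π(Bᶜ) + δβ`. Integrating this bound over the event that the first `i` draws avoid `B`, which
is measurable with respect to the past, multiplies its probability by at most `π(Bᶜ) + δβ`;
induction on `L` gives the power.
-/

section
variable {Ω : Type*} {m m₀ : MeasurableSpace Ω} {μ : Measure Ω}

theorem measureReal_inter_le_mul_of_condExp_indicator_le [IsFiniteMeasure μ] (hm : m ≤ m₀)
    {E S : Set Ω} (hE : MeasurableSet[m] E) (hS : MeasurableSet S) {c : ℝ}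
    (hcond : ∀ᵐ ω ∂μ, μ[S.indicator 1 | m] ω ≤ c) :
    μ.real (E ∩ S) ≤ μ.real E * c :=
  calc μ.real (E ∩ S)
      = ∫ ω in E, S.indicator 1 ω ∂μ := by
        rw [integral_indicator_one hS, measureReal_restrict_apply hS, Set.inter_comm]
    _ = ∫ ω in E, μ[S.indicator 1 | m] ω ∂μ :=
        (setIntegral_condExp hm ((integrable_const 1).indicator hS) hE).symm
    _ ≤ ∫ _ in E, c ∂μ :=
        setIntegral_mono_ae integrable_condExp.integrableOn integrableOn_const hcond
    _ = μ.real E * c := by rw [setIntegral_const, smul_eq_mul]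

theorem measureReal_iInter_le_pow_of_condExp_indicator_le [IsProbabilityMeasure μ] {L : ℕ}
    {m : Fin L → MeasurableSpace Ω} (hm : ∀ i, m i ≤ m₀) {S : Fin L → Set Ω}
    (hS : ∀ i, MeasurableSet (S i)) (hSm : ∀ i j, j < i → MeasurableSet[m i] (S j))
    {c : ℝ} (hc : 0 ≤ c) (hcond : ∀ i, ∀ᵐ ω ∂μ, μ[(S i).indicator 1 | m i] ω ≤ c) :
    μ.real (⋂ i, S i) ≤ c ^ L := by
  induction L with
  | zero => simp
  | succ L ih =>
    have hinter : ⋂ i, S i = (⋂ i : Fin L, S i.castSucc) ∩ S (Fin.last L) := by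
      ext ω; simp [Fin.forall_fin_succ', and_comm]
    have hlast : MeasurableSet[m (Fin.last L)] (⋂ i : Fin L, S i.castSucc) :=
      .iInter fun i => hSm _ _ i.castSucc_lt_last
    calc μ.real (⋂ i, S i)
        ≤ μ.real (⋂ i : Fin L, S i.castSucc) * c := by
          rw [hinter]
          exact measureReal_inter_le_mul_of_condExp_indicator_le (hm _) hlast (hS _) (hcond _)
      _ ≤ c ^ L * c := by
          gcongr
          exact ih (fun i => hm _) (fun i => hS _)
            (fun i j hji => hSm _ _ (Fin.castSucc_lt_castSucc_iff.mpr hji)) (fun i => hcond _)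
      _ = c ^ (L + 1) := (pow_succ c L).symm

end

theorem stmt_6_general (Θ : Type) [mΘ : MeasurableSpace Θ] (π : Measure Θ)
    (Ω : Type) [mΩ : MeasurableSpace Ω] (P : Measure Ω) [IsProbabilityMeasure P]
    (L : ℕ) (X : Fin L → Ω → Θ) (hXmeas : ∀ i, Measurable (X i))
    (δβ : ℝ) (hδβ0 : 0 ≤ δβ)
    (B : Set Θ) (hB : MeasurableSet B)
    (hcond : ∀ (i : Fin L) (A : Set Θ), MeasurableSet A →
      ∀ᵐ ω ∂P,
        |(P[(fun ω' => Set.indicator A (fun _ => (1 : ℝ)) (X i ω')) |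
            ⨆ j : Fin L, ⨆ _ : j < i, MeasurableSpace.comap (X j) mΘ]) ω -
          (π A).toReal| ≤ δβ) :
    (P {ω | ∀ i, X i ω ∉ B}).toReal ≤ ((π Bᶜ).toReal + δβ) ^ L := by
  have hpast_le (i : Fin L) : (⨆ j : Fin L, ⨆ _ : j < i, MeasurableSpace.comap (X j) mΘ) ≤ mΩ :=
    iSup₂_le fun j _ => (hXmeas j).comap_le
  have hpast_meas (i j : Fin L) (hji : j < i) :
      MeasurableSet[⨆ j : Fin L, ⨆ _ : j < i, MeasurableSpace.comap (X j) mΘ] (X j ⁻¹' Bᶜ) :=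
    le_iSup₂ (f := fun j (_ : j < i) => MeasurableSpace.comap (X j) mΘ) j hji _
      ⟨Bᶜ, hB.compl, rfl⟩
  have hset : {ω | ∀ i, X i ω ∉ B} = ⋂ i, X i ⁻¹' Bᶜ := by ext; simp
  rw [hset]
  exact measureReal_iInter_le_pow_of_condExp_indicator_le hpast_le (fun i => hXmeas i hB.compl)
    hpast_meas (by positivity) fun i =>
      (hcond i Bᶜ hB.compl).mono fun _ h => sub_le_iff_le_add'.mp (abs_le.mp h).2

/-- Let `π` be a probability measure on `Θ`, `B ⊆ Θ` measurable,
`δβ ∈ [0,1)`, and let `X_1, …, X_L` be random points such that, for each `i`, the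
conditional distribution of `X_i` given `(X_1, …, X_{i−1})` is almost surely within
total-variation distance `δβ` of `π` (expressed here via conditional expectations of
indicators: for every measurable `A`, a.s.
`|P[X_i ∈ A | X_1, …, X_{i−1}] − π(A)| ≤ δβ`).  Then
`P(X_1 ∉ B, …, X_L ∉ B) ≤ (π(Bᶜ) + δβ)^L`. -/
theorem stmt_6 (Θ : Type) [mΘ : MeasurableSpace Θ] (π : Measure Θ)
    [IsProbabilityMeasure π]
    (Ω : Type) [mΩ : MeasurableSpace Ω] (P : Measure Ω) [IsProbabilityMeasure P]
    (L : ℕ) (X : Fin L → Ω → Θ) (hXmeas : ∀ i, Measurable (X i))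
    (δβ : ℝ) (hδβ0 : 0 ≤ δβ) (hδβ1 : δβ < 1)
    (B : Set Θ) (hB : MeasurableSet B)
    (hcond : ∀ (i : Fin L) (A : Set Θ), MeasurableSet A →
      ∀ᵐ ω ∂P,
        |(P[(fun ω' => Set.indicator A (fun _ => (1 : ℝ)) (X i ω')) |
            ⨆ j : Fin L, ⨆ _ : j < i, MeasurableSpace.comap (X j) mΘ]) ω -
          (π A).toReal| ≤ δβ) :
    (P {ω | ∀ i, X i ω ∉ B}).toReal ≤ ((π Bᶜ).toReal + δβ) ^ L :=
  stmt_6_general Θ (mΘ := mΘ) π Ω (mΩ := mΩ) P L X hXmeas δβ hδβ0 B hB hcond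
end

section
/- Let Θ ⊆ ℝ^d be a bounded measurable set, F̂ : Θ → ℝ bounded and measurable, β > 0, and π_β the probability measure on Θ with density proportional to exp(−β F̂(θ)). Let θ_0 ∈ Θ, r > 0 and B ⊆ Θ measurable with B_r(θ_0) ⊆ B, and let M > 0 and a ∈ ℝ. Suppose F̂(θ) − F̂(θ_0) ≤ M‖θ − θ_0‖² for all θ ∈ B_r(θ_0) and F̂(θ) − F̂(θ_0) ≥ a for all θ ∈ Θ \ B. Then π_β(Θ \ B) ≤ exp(−β a) · Leb(Θ \ B) / ( ∫_{−r/√d}^{r/√d} exp(−β M t²) dt )^d. -/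
/-!
On `Θ \ B` the weight `exp (-β F̂)` is at most `exp (-β (a + F̂ θ₀))`, which bounds the numerator.
For the normalising constant, restrict to the cube of half-side `r / √d` around `θ₀`: it lies in
`B_r(θ₀)`, where the quadratic upper bound gives
`exp (-β F̂ θ) ≥ exp (-β F̂ θ₀) * ∏ i, exp (-β M (θ i - θ₀ i) ^ 2)`,
and the integral of this product over the cube factorises into the `d`-th power of a
one-dimensional integral.
-/

open MeasureTheory Set Real

theorem integrableOn_exp_of_le {X : Type*} [MeasurableSpace X] {μ : Measure X} {s : Set X}
    {g : X → ℝ} {K : ℝ} (hg : Measurable g) (hs : μ s < ⊤) (hK : ∀ x ∈ s, g x ≤ K) :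
    IntegrableOn (fun x => exp (g x)) s μ := by
  refine Measure.integrableOn_of_bounded (M := exp K) hs.ne hg.exp.aestronglyMeasurable ?_
  have hgK : ∀ᵐ x ∂μ.restrict s, g x ≤ K :=
    (ae_restrict_iff (measurableSet_le hg measurable_const)).2 (ae_of_all _ hK)
  filter_upwards [hgK] with x hx
  rw [Real.norm_eq_abs, abs_of_pos (exp_pos _)]
  exact exp_le_exp.2 hx

variable {ι : Type*} [Fintype ι]

def cube (x : EuclideanSpace ℝ ι) (c : ℝ) : Set (EuclideanSpace ℝ ι) :=
  WithLp.ofLp ⁻¹' univ.pi fun i => Icc (x i - c) (x i + c)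

theorem measurableSet_cube (x : EuclideanSpace ℝ ι) (c : ℝ) : MeasurableSet (cube x c) :=
  (MeasurableSet.univ_pi fun _ => measurableSet_Icc).preimage (WithLp.measurable_ofLp _ _)

theorem cube_subset_closedBall (x : EuclideanSpace ℝ ι) {c r : ℝ} (hr : 0 ≤ r)
    (hcr : Fintype.card ι * c ^ 2 ≤ r ^ 2) : cube x c ⊆ Metric.closedBall x r := by
  intro y hy
  have hcoord : ∀ i, dist (y i) (x i) ^ 2 ≤ c ^ 2 := fun i => by
    obtain ⟨h₁, h₂⟩ := hy i (mem_univ i)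
    rw [Real.dist_eq, sq_abs]
    nlinarith
  rw [Metric.mem_closedBall, EuclideanSpace.dist_eq, Real.sqrt_le_left hr]
  calc ∑ i, dist (y i) (x i) ^ 2 ≤ ∑ _i : ι, c ^ 2 := Finset.sum_le_sum fun i _ => hcoord i
    _ = Fintype.card ι * c ^ 2 := by simp
    _ ≤ r ^ 2 := hcr

theorem cube_div_sqrt_card_subset_closedBall (x : EuclideanSpace ℝ ι) {r : ℝ} (hr : 0 ≤ r) :
    cube x (r / √(Fintype.card ι)) ⊆ Metric.closedBall x r := by
  refine cube_subset_closedBall x hr ?_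
  rcases (Nat.cast_nonneg (α := ℝ) (Fintype.card ι)).eq_or_lt with h | h
  · rw [← h, zero_mul]
    positivity
  · rw [div_pow, Real.sq_sqrt h.le, mul_div_cancel₀ _ h.ne']

theorem setIntegral_cube_prod (x : EuclideanSpace ℝ ι) {c : ℝ} (hc : 0 ≤ c) (g : ℝ → ℝ) :
    ∫ y in cube x c, ∏ i, g (y i - x i) = (∫ t in -c..c, g t) ^ Fintype.card ι := by
  rw [cube, (PiLp.volume_preserving_ofLp ι).setIntegral_preimage_emb
      (MeasurableEquiv.toLp 2 (ι → ℝ)).symm.measurableEmbedding (fun y => ∏ i, g (y i - x i)),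
    volume_pi, Measure.restrict_pi_pi, integral_fintype_prod_eq_prod (fun i t => g (t - x i)),
    ← Finset.card_univ, ← Finset.prod_const]
  refine Finset.prod_congr rfl fun i _ => ?_
  rw [integral_Icc_eq_integral_Ioc, ← intervalIntegral.integral_of_le (by linarith),
    intervalIntegral.integral_comp_sub_right, sub_sub_cancel_left, add_sub_cancel_left]

theorem setIntegral_cube_exp_neg_mul_norm_sq (x : EuclideanSpace ℝ ι) {c : ℝ} (hc : 0 ≤ c)
    (b : ℝ) :
    ∫ y in cube x c, exp (-(b * ‖y - x‖ ^ 2)) =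
      (∫ t in -c..c, exp (-(b * t ^ 2))) ^ Fintype.card ι := by
  rw [← setIntegral_cube_prod x hc]
  congr 1 with y
  rw [← Real.exp_sum, EuclideanSpace.norm_sq_eq, Finset.mul_sum, ← Finset.sum_neg_distrib]
  simp only [PiLp.sub_apply, Real.norm_eq_abs, sq_abs]

theorem intervalIntegral_exp_neg_mul_sq_pos {c : ℝ} (hc : 0 < c) (b : ℝ) :
    0 < ∫ t in -c..c, exp (-(b * t ^ 2)) :=
  intervalIntegral.intervalIntegral_pos_of_pos_on
    ((by fun_prop : Continuous fun t => exp (-(b * t ^ 2))).intervalIntegrable _ _)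
    (fun _ _ => exp_pos _) (by linarith)

theorem le_setIntegral_exp_neg_of_le_quadratic {Θ : Set (EuclideanSpace ℝ ι)}
    {F : EuclideanSpace ℝ ι → ℝ} {θ₀ : EuclideanSpace ℝ ι} {β M r : ℝ} (hβ : 0 ≤ β) (hr : 0 ≤ r)
    (hint : IntegrableOn (fun θ => exp (-(β * F θ))) Θ) (hball : Metric.closedBall θ₀ r ⊆ Θ)
    (hup : ∀ θ ∈ Metric.closedBall θ₀ r, F θ - F θ₀ ≤ M * ‖θ - θ₀‖ ^ 2) :
    exp (-(β * F θ₀)) *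
        (∫ t in -(r / √(Fintype.card ι))..(r / √(Fintype.card ι)), exp (-(β * M * t ^ 2))) ^
          Fintype.card ι ≤
      ∫ θ in Θ, exp (-(β * F θ)) := by
  set S := cube θ₀ (r / √(Fintype.card ι))
  have hSball : S ⊆ Metric.closedBall θ₀ r := cube_div_sqrt_card_subset_closedBall θ₀ hr
  have hSΘ : S ⊆ Θ := hSball.trans hball
  calc _ = ∫ θ in S, exp (-(β * (F θ₀ + M * ‖θ - θ₀‖ ^ 2))) := by
        rw [← setIntegral_cube_exp_neg_mul_norm_sq θ₀ (by positivity), ← integral_const_mul]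
        congr 1 with θ
        rw [← exp_add]
        ring_nf
    _ ≤ ∫ θ in S, exp (-(β * F θ)) := by
        refine integral_mono_of_nonneg (ae_of_all _ fun _ => (exp_pos _).le) (hint.mono_set hSΘ)
          (ae_restrict_of_forall_mem (measurableSet_cube _ _) fun θ hθ => ?_)
        have hθup := hup θ (hSball hθ)
        exact exp_le_exp.2 (neg_le_neg (mul_le_mul_of_nonneg_left (by linarith) hβ))
    _ ≤ ∫ θ in Θ, exp (-(β * F θ)) :=
        setIntegral_mono_set hint (ae_of_all _ fun _ => (exp_pos _).le) hSΘ.eventuallyLE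

theorem stmt_16_general (d : ℕ) (Θ : Set (EuclideanSpace ℝ (Fin d)))
    (hΘb : Bornology.IsBounded Θ)
    (Fhat : EuclideanSpace ℝ (Fin d) → ℝ) (hFm : Measurable Fhat)
    (hFb : ∃ M0, ∀ θ ∈ Θ, |Fhat θ| ≤ M0)
    (β : ℝ) (hβ : 0 < β)
    (θ0 : EuclideanSpace ℝ (Fin d))
    (r : ℝ) (hr : 0 < r)
    (B : Set (EuclideanSpace ℝ (Fin d)))
    (hrB : Metric.closedBall θ0 r ⊆ B) (hBΘ : B ⊆ Θ)
    (M : ℝ) (a : ℝ)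
    (hup : ∀ θ ∈ Metric.closedBall θ0 r, Fhat θ - Fhat θ0 ≤ M * ‖θ - θ0‖ ^ 2)
    (hlow : ∀ θ ∈ Θ \ B, a ≤ Fhat θ - Fhat θ0) :
    (∫ θ in Θ \ B, Real.exp (-(β * Fhat θ))) / (∫ θ in Θ, Real.exp (-(β * Fhat θ))) ≤
      Real.exp (-(β * a)) * (volume (Θ \ B)).toReal /
        (∫ t in (-(r / Real.sqrt d))..(r / Real.sqrt d), Real.exp (-(β * M * t ^ 2))) ^ d := by
  obtain ⟨M0, hM0⟩ := hFb
  set C := ∫ t in (-(r / √d))..(r / √d), exp (-(β * M * t ^ 2))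
  have hΘfin : volume Θ < ⊤ := hΘb.measure_lt_top
  have hint : IntegrableOn (fun θ => exp (-(β * Fhat θ))) Θ :=
    integrableOn_exp_of_le (K := β * M0) (hFm.const_mul β).neg hΘfin fun θ hθ => by
      linarith [mul_le_mul_of_nonneg_left (neg_le_of_abs_le (hM0 θ hθ)) hβ.le]
  have hnum : ∫ θ in Θ \ B, exp (-(β * Fhat θ)) ≤
      exp (-(β * (a + Fhat θ0))) * (volume (Θ \ B)).toReal := by
    rw [← measureReal_def]
    refine (Real.le_norm_self _).trans (norm_setIntegral_le_of_norm_le_const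
      ((measure_mono sdiff_subset).trans_lt hΘfin) fun θ hθ => ?_)
    rw [Real.norm_eq_abs, abs_of_pos (exp_pos _)]
    exact exp_le_exp.2 (neg_le_neg (mul_le_mul_of_nonneg_left (by linarith [hlow θ hθ]) hβ.le))
  have hden : exp (-(β * Fhat θ0)) * C ^ d ≤ ∫ θ in Θ, exp (-(β * Fhat θ)) := by
    simpa only [Fintype.card_fin] using
      le_setIntegral_exp_neg_of_le_quadratic hβ.le hr.le hint (hrB.trans hBΘ) hup
  have hC : 0 < C ^ d := by
    rcases d.eq_zero_or_pos with rfl | hd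
    · simp
    · exact pow_pos (intervalIntegral_exp_neg_mul_sq_pos (by positivity) _) d
  calc _ ≤ exp (-(β * (a + Fhat θ0))) * (volume (Θ \ B)).toReal /
          (exp (-(β * Fhat θ0)) * C ^ d) :=
        div_le_div₀ (by positivity) hnum (by positivity) hden
    _ = _ := by
        rw [show -(β * (a + Fhat θ0)) = -(β * a) + -(β * Fhat θ0) by ring, exp_add]
        field_simp

/-- For a bounded measurable set `Θ`, a bounded measurable `F̂`, `β > 0`,
`θ0 ∈ Θ`, `r > 0`, a measurable `B` with `B_r(θ0) ⊆ B ⊆ Θ`, `M > 0` and `a ∈ ℝ` with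
`F̂(θ) − F̂(θ0) ≤ M‖θ − θ0‖²` on `B_r(θ0)` and `F̂(θ) − F̂(θ0) ≥ a` on `Θ \ B`, the Gibbs
probability of `Θ \ B` is at most
`exp(−βa)·Leb(Θ \ B) / ( ∫_{−r/√d}^{r/√d} exp(−βMt²) dt )^d`. -/
theorem stmt_16 (d : ℕ) (Θ : Set (EuclideanSpace ℝ (Fin d)))
    (hΘm : MeasurableSet Θ) (hΘb : Bornology.IsBounded Θ)
    (Fhat : EuclideanSpace ℝ (Fin d) → ℝ) (hFm : Measurable Fhat)
    (hFb : ∃ M0, ∀ θ ∈ Θ, |Fhat θ| ≤ M0)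
    (β : ℝ) (hβ : 0 < β)
    (θ0 : EuclideanSpace ℝ (Fin d)) (hθ0 : θ0 ∈ Θ)
    (r : ℝ) (hr : 0 < r)
    (B : Set (EuclideanSpace ℝ (Fin d))) (hBm : MeasurableSet B)
    (hrB : Metric.closedBall θ0 r ⊆ B) (hBΘ : B ⊆ Θ)
    (M : ℝ) (hM : 0 < M) (a : ℝ)
    (hup : ∀ θ ∈ Metric.closedBall θ0 r, Fhat θ - Fhat θ0 ≤ M * ‖θ - θ0‖ ^ 2)
    (hlow : ∀ θ ∈ Θ \ B, a ≤ Fhat θ - Fhat θ0) :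
    (∫ θ in Θ \ B, Real.exp (-(β * Fhat θ))) / (∫ θ in Θ, Real.exp (-(β * Fhat θ))) ≤
      Real.exp (-(β * a)) * (volume (Θ \ B)).toReal /
        (∫ t in (-(r / Real.sqrt d))..(r / Real.sqrt d), Real.exp (-(β * M * t ^ 2))) ^ d :=
  stmt_16_general d Θ hΘb Fhat hFm hFb β hβ θ0 r hr B hrB hBΘ M a hup hlow
end
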